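/- arXiv:1407.8328 — 7 statements merged into one kernel-verified Lean document; each statement's English description precedes it below -/
import Mathlib

section
/- Let X be a compact Hausdorff space, σ a homeomorphism, and x ∈ X an aperiodic point (all σ^n x, n ∈ ℤ, are distinct). Define bounded operators on ℓ¹(ℤ): S is the right shift (S e_k = e_{k+1}), and for f ∈ C(X), M_f is the diagonal operator (M_f ξ)(k) = f(σ^k x) ξ(k). Then for every ρ = Σ_n λ_n e_n ∈ ℓ¹(ℤ) with λ_0 = 1, every τ ∈ ℓ¹(ℤ), and every ε > 0, there exists an element a in the Banach algebra generated by the operators M_f and S^{±1} (given as an absolutely convergent series Σ_n M_{f_n} S^n with Σ_n ‖f_n‖_∞ ≤ ‖τ‖_1) such that ‖τ − a(ρ)‖_1 < ε. -/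
/-!
Pick a finite window `F ⊆ ℤ` outside which both `τ` and `ρ` carry little ℓ¹-mass. For `n ∈ F` let
`g n` be a Urysohn function equal to `1` at `σⁿ x` and vanishing at the finitely many points `σᵏ x`
with `k - n ∈ F`, `k ≠ n` (aperiodicity keeps them away from `σⁿ x`), and put `f n = τ n • g n`.
Because `ρ 0 = 1`, the term `M_{f n} Sⁿ ρ` agrees with `τ n • eₙ` except on the indices where
`Sⁿ ρ` sees `ρ` outside `F`, so `‖τ - a ρ‖₁` is at most the tail of `τ` plus `‖τ‖₁` times the
tail of `ρ`.
-/

section LpOne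

variable {α : Type*} {E : α → Type*} [∀ i, NormedAddCommGroup (E i)]

theorem memℓp_one_iff {f : ∀ i, E i} : Memℓp f 1 ↔ Summable fun i => ‖f i‖ := by
  simp [memℓp_gen_iff (p := 1) (by norm_num)]

theorem lp.norm_eq_tsum_norm (f : lp E 1) : ‖f‖ = ∑' i, ‖f i‖ := by
  simp [lp.norm_eq_tsum_rpow (p := 1) (by norm_num)]

end LpOne

theorem exists_continuousMap_eq_one_eqOn_zero {X : Type*} [TopologicalSpace X]
    [CompletelyRegularSpace X] [T1Space X] {p : X} {s : Set X} (hs : s.Finite) (hp : p ∉ s) :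
    ∃ g : C(X, ℂ), (∀ y, ‖g y‖ ≤ 1) ∧ g p = 1 ∧ Set.EqOn g 0 s := by
  obtain ⟨u, hu, hup, hus⟩ := CompletelyRegularSpace.completely_regular p s hs.isClosed hp
  refine ⟨⟨fun y => ((unitInterval.symm (u y) : ℝ) : ℂ), by fun_prop⟩, fun y => ?_, ?_, ?_⟩
  · rw [ContinuousMap.coe_mk, Complex.norm_real, Real.norm_of_nonneg (unitInterval.nonneg _)]
    exact unitInterval.le_one _
  · simp [hup]
  · intro q hq
    simp [hus hq]

theorem Finset.tsum_compl_eq_tsum_indicator {β : Type*} (s : Finset β) (f : β → ℝ) :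
    ∑' k : {k // k ∉ s}, f k = ∑' k, (↑s : Set β)ᶜ.indicator f k :=
  _root_.tsum_subtype _ f

section Shift

variable {G : Type*} [AddGroup G]

theorem summable_norm_comp_sub {ρ : G → ℂ} (hρ : Summable fun k => ‖ρ k‖) (n : G) :
    Summable fun k => ‖ρ (k - n)‖ :=
  (Equiv.subRight n).summable_iff.mpr hρ

theorem summable_mul_comp_sub {ρ : G → ℂ} (hρ : Summable fun k => ‖ρ k‖) {c : G → ℂ}
    (hc : ∀ k, ‖c k‖ ≤ 1) (n : G) : Summable fun k => c k * ρ (k - n) :=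
  .of_norm_bounded (summable_norm_comp_sub hρ n) fun k => by
    rw [norm_mul]
    exact mul_le_of_le_one_left (norm_nonneg _) (hc k)

theorem tsum_indicator_compl_comp_sub (ρ : G → ℂ) (F : Finset G) (n : G) :
    ∑' k, (↑F : Set G)ᶜ.indicator (fun m => ‖ρ m‖) (k - n) = ∑' m : {m // m ∉ F}, ‖ρ m‖ :=
  ((Equiv.subRight n).tsum_eq _).trans (F.tsum_compl_eq_tsum_indicator _).symm

theorem norm_mul_comp_sub_sub_ite_le [DecidableEq G] {ρ : G → ℂ} (hρ0 : ρ 0 = 1)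
    {F : Finset G} {c : G → ℂ} {n : G} (hc : ∀ k, ‖c k‖ ≤ 1) (hcn : c n = 1)
    (hcF : ∀ k, k - n ∈ F → k ≠ n → c k = 0) (k : G) :
    ‖c k * ρ (k - n) - if n = k then 1 else 0‖
      ≤ (↑F : Set G)ᶜ.indicator (fun m => ‖ρ m‖) (k - n) := by
  rcases eq_or_ne n k with rfl | hnk
  · simpa [hcn, hρ0] using Set.indicator_nonneg (fun _ _ => norm_nonneg _) _
  rw [if_neg hnk, sub_zero]
  by_cases hkF : k - n ∈ F
  · simp [hcF k hkF hnk.symm, hkF]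
  · simpa [hkF] using mul_le_of_le_one_left (norm_nonneg _) (hc k)

theorem tsum_norm_sub_sum_mul_comp_sub_le [DecidableEq G] {τ ρ : G → ℂ}
    (hτ : Summable fun k => ‖τ k‖) (hρ : Summable fun k => ‖ρ k‖) (hρ0 : ρ 0 = 1)
    (F : Finset G) {c : G → G → ℂ} (hc : ∀ n k, ‖c n k‖ ≤ 1) (hcn : ∀ n, c n n = 1)
    (hcF : ∀ n k, k - n ∈ F → k ≠ n → c n k = 0) :
    ∑' k, ‖τ k - ∑ n ∈ F, τ n * (c n k * ρ (k - n))‖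
      ≤ ∑' k : {k // k ∉ F}, ‖τ k‖ + (∑' k, ‖τ k‖) * ∑' m : {m // m ∉ F}, ‖ρ m‖ := by
  set tailτ : G → ℝ := (↑F : Set G)ᶜ.indicator fun k => ‖τ k‖
  set tailρ : G → ℝ := (↑F : Set G)ᶜ.indicator fun m => ‖ρ m‖
  have hsplit : ∀ k, τ k - ∑ n ∈ F, τ n * (c n k * ρ (k - n))
      = (↑F : Set G)ᶜ.indicator τ k
        - ∑ n ∈ F, τ n * (c n k * ρ (k - n) - if n = k then 1 else 0) := by
    intro k
    by_cases hk : k ∈ F <;>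
      simp [hk, mul_sub, Finset.sum_sub_distrib, Finset.sum_ite_eq']
  have hle : ∀ k, ‖τ k - ∑ n ∈ F, τ n * (c n k * ρ (k - n))‖
      ≤ tailτ k + ∑ n ∈ F, ‖τ n‖ * tailρ (k - n) := by
    intro k
    rw [hsplit]
    refine (norm_sub_le _ _).trans (add_le_add (norm_indicator_eq_indicator_norm _ _).le
      ((norm_sum_le _ _).trans ?_))
    gcongr with n
    rw [norm_mul]
    gcongr
    exact norm_mul_comp_sub_sub_ite_le hρ0 (hc n) (hcn n) (hcF n) k
  have hsumρ : ∀ n, Summable fun k => ‖τ n‖ * tailρ (k - n) := fun n =>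
    ((Equiv.subRight n).summable_iff.mpr (hρ.indicator _)).mul_left _
  have hsum : Summable fun k => tailτ k + ∑ n ∈ F, ‖τ n‖ * tailρ (k - n) :=
    (hτ.indicator _).add (summable_sum fun n _ => hsumρ n)
  calc ∑' k, ‖τ k - ∑ n ∈ F, τ n * (c n k * ρ (k - n))‖
      ≤ ∑' k, (tailτ k + ∑ n ∈ F, ‖τ n‖ * tailρ (k - n)) :=
        (hsum.of_nonneg_of_le (fun _ => norm_nonneg _) hle).tsum_le_tsum hle hsum
    _ = ∑' k : {k // k ∉ F}, ‖τ k‖ + (∑ n ∈ F, ‖τ n‖) * ∑' m : {m // m ∉ F}, ‖ρ m‖ := by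
        rw [(hτ.indicator _).tsum_add (summable_sum fun n _ => hsumρ n),
          Summable.tsum_finsetSum fun n _ => hsumρ n, Finset.sum_mul]
        simp only [tsum_mul_left, tailρ, tsum_indicator_compl_comp_sub,
          F.tsum_compl_eq_tsum_indicator fun k => ‖τ k‖]
    _ ≤ _ := by
        gcongr
        exact hτ.sum_le_tsum F fun _ _ => norm_nonneg _

end Shift

theorem stmt9 {X : Type*} [TopologicalSpace X] [CompactSpace X] [T2Space X]
    (σ : X ≃ₜ X) (x : X)
    (hx : Function.Injective fun n : ℤ => (σ.toEquiv ^ n) x)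
    (ρ : lp (fun _ : ℤ => ℂ) 1) (hρ0 : (ρ : ∀ _ : ℤ, ℂ) 0 = 1)
    (τ : lp (fun _ : ℤ => ℂ) 1) (ε : ℝ) (hε : 0 < ε) :
    ∃ f : ℤ → C(X, ℂ), Summable (fun n => ‖f n‖) ∧ (∑' n, ‖f n‖) ≤ ‖τ‖ ∧
      ∃ w : lp (fun _ : ℤ => ℂ) 1,
        (∀ k : ℤ, (w : ∀ _ : ℤ, ℂ) k
          = ∑' n : ℤ, f n ((σ.toEquiv ^ k) x) * (ρ : ∀ _ : ℤ, ℂ) (k - n)) ∧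
        ‖τ - w‖ < ε := by
  set z : ℤ → X := fun k => (σ.toEquiv ^ k) x
  have hτ : Summable fun k => ‖(τ : ℤ → ℂ) k‖ := memℓp_one_iff.mp τ.2
  have hρ : Summable fun k => ‖(ρ : ℤ → ℂ) k‖ := memℓp_one_iff.mp ρ.2
  obtain ⟨F, hF⟩ : ∃ F : Finset ℤ, ∑' k : {k // k ∉ F}, ‖(τ : ℤ → ℂ) k‖
      + ‖τ‖ * ∑' m : {m // m ∉ F}, ‖(ρ : ℤ → ℂ) m‖ < ε := by
    have h := (tendsto_tsum_compl_atTop_zero fun k => ‖(τ : ℤ → ℂ) k‖).add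
      ((tendsto_tsum_compl_atTop_zero fun m => ‖(ρ : ℤ → ℂ) m‖).const_mul ‖τ‖)
    rw [mul_zero, add_zero] at h
    exact (h.eventually (gt_mem_nhds hε)).exists
  have hbump : ∀ n, ∃ g : C(X, ℂ), (∀ y, ‖g y‖ ≤ 1) ∧ g (z n) = 1 ∧
      Set.EqOn g 0 (z '' {k | k - n ∈ F ∧ k ≠ n}) := fun n =>
    exists_continuousMap_eq_one_eqOn_zero
      (((F.finite_toSet.preimage sub_left_injective.injOn).subset fun _ hk => hk.1).image z)
      fun ⟨_, hk, hzk⟩ => hk.2 (hx hzk)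
  choose g hg1 hgn hgF using hbump
  let f : ℤ → C(X, ℂ) := fun n => if n ∈ F then (τ : ℤ → ℂ) n • g n else 0
  have hf : ∀ n, ‖f n‖ ≤ ‖(τ : ℤ → ℂ) n‖ := by
    intro n
    by_cases hn : n ∈ F
    · simp only [f, if_pos hn, norm_smul]
      exact mul_le_of_le_one_right (norm_nonneg _) ((g n).norm_le zero_le_one |>.mpr (hg1 n))
    · simp [f, hn]
  have hfsum : Summable fun n => ‖f n‖ := hτ.of_nonneg_of_le (fun _ => norm_nonneg _) hf
  let W : ℤ → ℂ := fun k => ∑ n ∈ F, (τ : ℤ → ℂ) n * (g n (z k) * (ρ : ℤ → ℂ) (k - n))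
  have hW : Memℓp W 1 := memℓp_one_iff.mpr <| summable_norm_iff.mpr <| summable_sum
    fun n _ => (summable_mul_comp_sub hρ (fun k => hg1 n (z k)) n).mul_left _
  refine ⟨f, hfsum, ?_, ⟨W, hW⟩, fun k => ?_, ?_⟩
  · rw [lp.norm_eq_tsum_norm]
    exact hfsum.tsum_le_tsum hf hτ
  · rw [tsum_eq_sum (s := F) fun n hn => by simp [f, hn]]
    refine Finset.sum_congr rfl fun n hn => ?_
    simp [f, hn, mul_assoc, z]
  · rw [lp.norm_eq_tsum_norm] at hF ⊢
    exact (tsum_norm_sub_sum_mul_comp_sub_le hτ hρ hρ0 F (fun n k => hg1 n (z k)) hgn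
      fun n k hk hkn => hgF n ⟨k, ⟨hk, hkn⟩, rfl⟩).trans_lt hF
end

section
/- Let X be a compact Hausdorff space, σ a homeomorphism, and x ∈ X an aperiodic point. Let ℓ¹(Σ) act on ℓ¹(ℤ) via π¹_x where π¹_x(f) ξ (k) = f(σ^k x) ξ(k) for f ∈ C(X) and π¹_x(δ) is the right shift. Then π¹_x is algebraically irreducible: for every nonzero ρ ∈ ℓ¹(ℤ) and every τ ∈ ℓ¹(ℤ) there exists a ∈ ℓ¹(Σ) with π¹_x(a) ρ = τ. Moreover, for each ε > 0, a can be chosen with ‖a‖ ≤ (1+ε)‖τ‖_1 / max_n |ρ(n)|. -/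
/-!
Let `|ρ|` attain its maximum `M` at `n₀`. Truncate `t ∈ ℓ¹` to a finite set `K` and `ρ` to a
finite set `F ∋ n₀`. Since the orbit is injective, Urysohn functions `b_k` with `b_k (σ^k x) = 1`
that vanish at the finitely many points `σ^(k - n₀ + m) x`, `m ∈ F \ {n₀}`, give
`a = ∑_{k ∈ K} (t k / ρ n₀) b_k δ^(k - n₀)` with `π(a) ρ_F = t_K` exactly and `‖a‖ ≤ ‖t‖ / M`.
The two tails then make `‖t - π(a) ρ‖` as small as we like, and the iteration from the proof of
the open mapping theorem turns these approximate solutions into an exact one, losing only a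
factor `1 + ε` in the norm.
-/

open Filter Topology

section ApproximatePreimage

variable {R E F : Type*} [Semiring R] [NormedAddCommGroup E] [Module R E] [CompleteSpace E]
  [NormedAddCommGroup F] [Module R F]

theorem ContinuousLinearMap.exists_preimage_norm_le_of_approx (T : E →L[R] F) {C δ : ℝ}
    (hC : 0 ≤ C) (hδ₀ : 0 ≤ δ) (hδ₁ : δ < 1)
    (hT : ∀ y, ∃ x, ‖x‖ ≤ C * ‖y‖ ∧ ‖y - T x‖ ≤ δ * ‖y‖) (y : F) :
    ∃ x, T x = y ∧ ‖x‖ ≤ C / (1 - δ) * ‖y‖ := by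
  choose g hg_norm hg_res using hT
  set r : ℕ → F := fun j => (fun z => z - T (g z))^[j] y
  have hr_succ (j : ℕ) : r (j + 1) = r j - T (g (r j)) := Function.iterate_succ_apply' _ _ _
  have hr_norm (j : ℕ) : ‖r j‖ ≤ δ ^ j * ‖y‖ := by
    induction j with
    | zero => simp [r]
    | succ j ih =>
      calc ‖r (j + 1)‖ ≤ δ * ‖r j‖ := hr_succ j ▸ hg_res _
        _ ≤ δ * (δ ^ j * ‖y‖) := by gcongr
        _ = δ ^ (j + 1) * ‖y‖ := by ring
  have hu_norm (j : ℕ) : ‖g (r j)‖ ≤ C * ‖y‖ * δ ^ j :=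
    calc ‖g (r j)‖ ≤ C * ‖r j‖ := hg_norm _
      _ ≤ C * (δ ^ j * ‖y‖) := by gcongr; exact hr_norm j
      _ = C * ‖y‖ * δ ^ j := by ring
  have hgeom := (hasSum_geometric_of_lt_one hδ₀ hδ₁).mul_left (C * ‖y‖)
  have hu : Summable fun j => ‖g (r j)‖ :=
    hgeom.summable.of_nonneg_of_le (fun _ => norm_nonneg _) hu_norm
  refine ⟨∑' j, g (r j), ?_, ?_⟩
  · have hpartial (n : ℕ) : T (∑ j ∈ Finset.range n, g (r j)) = y - r n := by
      induction n with
      | zero => simp [r]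
      | succ n ih => rw [Finset.sum_range_succ, map_add, ih, hr_succ]; abel
    have hr_lim : Tendsto r atTop (𝓝 0) := by
      refine squeeze_zero_norm hr_norm ?_
      simpa using (tendsto_pow_atTop_nhds_zero_of_lt_one hδ₀ hδ₁).mul_const ‖y‖
    have h := (T.continuous.tendsto _).comp hu.of_norm.hasSum.tendsto_sum_nat
    simp only [Function.comp_def, hpartial] at h
    simpa using tendsto_nhds_unique h (tendsto_const_nhds.sub hr_lim)
  · calc ‖∑' j, g (r j)‖ ≤ ∑' j, ‖g (r j)‖ := norm_tsum_le_tsum_norm hu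
      _ ≤ C * ‖y‖ * (1 - δ)⁻¹ := hasSum_le hu_norm hu.hasSum hgeom
      _ = C / (1 - δ) * ‖y‖ := by ring

theorem ContinuousLinearMap.exists_preimage_norm_le_one_add_of_approx (T : E →L[R] F) {C : ℝ}
    (hC : 0 ≤ C) (hT : ∀ y, ∀ η > 0, ∃ x, ‖x‖ ≤ C * ‖y‖ ∧ ‖y - T x‖ ≤ η) (y : F) {ε : ℝ}
    (hε : 0 < ε) : ∃ x, T x = y ∧ ‖x‖ ≤ (1 + ε) * C * ‖y‖ := by
  have hδ : ∀ y, ∃ x, ‖x‖ ≤ C * ‖y‖ ∧ ‖y - T x‖ ≤ ε / (1 + ε) * ‖y‖ := by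
    intro y
    rcases eq_or_ne y 0 with rfl | hy
    · exact ⟨0, by simp⟩
    · exact hT y _ (by positivity)
  convert T.exists_preimage_norm_le_of_approx hC (by positivity) _ hδ y using 4
  · field_simp; ring
  · rw [div_lt_one (by positivity)]; linarith

end ApproximatePreimage

theorem lp.hasSum_norm_one {α : Type*} {E : α → Type*} [∀ i, NormedAddCommGroup (E i)]
    (f : lp E 1) : HasSum (fun i => ‖f i‖) ‖f‖ := by
  simpa using lp.hasSum_norm (by norm_num) f

theorem hasSum_tsum_mul_sub_of_nonneg {G : Type*} [AddCommGroup G] {u v : G → ℝ}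
    (hu₀ : 0 ≤ u) (hv₀ : 0 ≤ v) (hu : Summable u) (hv : Summable v) :
    HasSum (fun k => ∑' n, u n * v (k - n)) ((∑' n, u n) * ∑' m, v m) := by
  have hprod := hu.hasSum.mul hv.hasSum (hu.mul_of_nonneg hv hu₀ hv₀)
  let e : G × G ≃ G × G :=
    { toFun := fun q => (q.2, q.1 - q.2)
      invFun := fun q => (q.1 + q.2, q.1)
      left_inv := fun q => by simp
      right_inv := fun q => by simp }
  have hconv : HasSum (fun q : G × G => u q.2 * v (q.1 - q.2)) ((∑' n, u n) * ∑' m, v m) :=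
    (e.hasSum_iff.mpr hprod :)
  exact hconv.prod_fiberwise fun k => (hconv.summable.prod_factor k).hasSum

section OrbitConv

variable {G X : Type*} [AddCommGroup G] [TopologicalSpace X] [CompactSpace X] (p : G → X)

theorem summable_norm_mul_norm_sub (ρ : lp (fun _ : G => ℂ) 1) (a : lp (fun _ : G => C(X, ℂ)) 1)
    (k : G) : Summable fun n => ‖a n‖ * ‖ρ (k - n)‖ :=
  ((lp.hasSum_norm_one a).summable.mul_right ‖ρ‖).of_nonneg_of_le (fun _ => by positivity)
    fun n => by gcongr; exact lp.norm_apply_le_norm one_ne_zero ρ _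

theorem norm_orbitConv_term_le (ρ : lp (fun _ : G => ℂ) 1) (a : lp (fun _ : G => C(X, ℂ)) 1)
    (k n : G) : ‖a n (p k) * ρ (k - n)‖ ≤ ‖a n‖ * ‖ρ (k - n)‖ := by
  rw [norm_mul]
  gcongr
  exact (a n).norm_coe_le_norm _

theorem summable_orbitConv_term (ρ : lp (fun _ : G => ℂ) 1) (a : lp (fun _ : G => C(X, ℂ)) 1)
    (k : G) : Summable fun n => a n (p k) * ρ (k - n) :=
  .of_norm_bounded (summable_norm_mul_norm_sub ρ a k) (norm_orbitConv_term_le p ρ a k)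

theorem hasSum_orbitConv_norm_bound (ρ : lp (fun _ : G => ℂ) 1) (a : lp (fun _ : G => C(X, ℂ)) 1) :
    HasSum (fun k => ∑' n, ‖a n‖ * ‖ρ (k - n)‖) (‖ρ‖ * ‖a‖) := by
  have h := hasSum_tsum_mul_sub_of_nonneg (fun _ => norm_nonneg _) (fun _ => norm_nonneg _)
    (lp.hasSum_norm_one a).summable (lp.hasSum_norm_one ρ).summable
  rwa [(lp.hasSum_norm_one a).tsum_eq, (lp.hasSum_norm_one ρ).tsum_eq, mul_comm] at h

theorem norm_tsum_orbitConv_term_le (ρ : lp (fun _ : G => ℂ) 1)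
    (a : lp (fun _ : G => C(X, ℂ)) 1) (k : G) :
    ‖∑' n, a n (p k) * ρ (k - n)‖ ≤ ∑' n, ‖a n‖ * ‖ρ (k - n)‖ :=
  tsum_of_norm_bounded (summable_norm_mul_norm_sub ρ a k).hasSum (norm_orbitConv_term_le p ρ a k)

theorem summable_norm_tsum_orbitConv_term (ρ : lp (fun _ : G => ℂ) 1)
    (a : lp (fun _ : G => C(X, ℂ)) 1) : Summable fun k => ‖∑' n, a n (p k) * ρ (k - n)‖ :=
  (hasSum_orbitConv_norm_bound ρ a).summable.of_nonneg_of_le (fun _ => norm_nonneg _)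
    (norm_tsum_orbitConv_term_le p ρ a)

theorem memℓp_orbitConv (ρ : lp (fun _ : G => ℂ) 1) (a : lp (fun _ : G => C(X, ℂ)) 1) :
    Memℓp (fun k => ∑' n, a n (p k) * ρ (k - n)) 1 :=
  memℓp_gen <| by simpa using summable_norm_tsum_orbitConv_term p ρ a

theorem tsum_norm_orbitConv_le (ρ : lp (fun _ : G => ℂ) 1) (a : lp (fun _ : G => C(X, ℂ)) 1) :
    ∑' k, ‖∑' n, a n (p k) * ρ (k - n)‖ ≤ ‖ρ‖ * ‖a‖ :=
  hasSum_le (norm_tsum_orbitConv_term_le p ρ a) (summable_norm_tsum_orbitConv_term p ρ a).hasSum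
    (hasSum_orbitConv_norm_bound ρ a)

/-- `orbitConv p ρ a` is `π_p(a) ρ`, where `a = ∑ₙ aₙ δⁿ` is an element of `ℓ¹(Σ)` and `π_p` is the
representation on `ℓ¹(G)` attached to the orbit `p` (for `G = ℤ`, `p n = σⁿ x`). -/
noncomputable def orbitConv :
    lp (fun _ : G => ℂ) 1 →L[ℂ] lp (fun _ : G => C(X, ℂ)) 1 →L[ℂ] lp (fun _ : G => ℂ) 1 :=
  LinearMap.mkContinuous₂
    (LinearMap.mk₂ ℂ (fun ρ a => ⟨_, memℓp_orbitConv p ρ a⟩)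
      (fun ρ₁ ρ₂ a => by
        ext k
        simp only [lp.coeFn_add, Pi.add_apply, mul_add]
        exact (summable_orbitConv_term p ρ₁ a k).tsum_add (summable_orbitConv_term p ρ₂ a k))
      (fun c ρ a => by
        ext k
        simp only [lp.coeFn_smul, Pi.smul_apply, smul_eq_mul, mul_left_comm _ c, tsum_mul_left])
      (fun ρ a₁ a₂ => by
        ext k
        simp only [lp.coeFn_add, Pi.add_apply, ContinuousMap.add_apply, add_mul]
        exact (summable_orbitConv_term p ρ a₁ k).tsum_add (summable_orbitConv_term p ρ a₂ k))
      (fun c ρ a => by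
        ext k
        simp only [lp.coeFn_smul, Pi.smul_apply, ContinuousMap.smul_apply, smul_eq_mul, mul_assoc,
          tsum_mul_left]))
    1 fun ρ a => by
      rw [one_mul]
      exact lp.norm_le_of_tsum_le (by norm_num) (by positivity)
        (by simpa using tsum_norm_orbitConv_le p ρ a)

theorem orbitConv_apply (ρ : lp (fun _ : G => ℂ) 1) (a : lp (fun _ : G => C(X, ℂ)) 1) (k : G) :
    orbitConv p ρ a k = ∑' n, a n (p k) * ρ (k - n) :=
  rfl

theorem norm_orbitConv_apply_le (ρ : lp (fun _ : G => ℂ) 1) (a : lp (fun _ : G => C(X, ℂ)) 1) :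
    ‖orbitConv p ρ a‖ ≤ ‖ρ‖ * ‖a‖ :=
  lp.norm_le_of_tsum_le (by norm_num) (by positivity) <| by
    simpa [orbitConv_apply] using tsum_norm_orbitConv_le p ρ a

theorem orbitConv_single_single [DecidableEq G] (m n : G) (r : ℂ) (c : C(X, ℂ)) :
    orbitConv p (lp.single 1 m r) (lp.single 1 n c) = lp.single 1 (n + m) (c (p (n + m)) * r) := by
  ext k
  rw [orbitConv_apply, tsum_eq_single n fun n' hn' => by simp [Pi.single_eq_of_ne hn']]
  rcases eq_or_ne k (n + m) with rfl | hk
  · simp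
  · have hkm : k - n ≠ m := fun h => hk (by rw [← h, add_sub_cancel])
    simp [Pi.single_eq_of_ne hk, Pi.single_eq_of_ne hkm]

end OrbitConv

theorem exists_continuousMap_norm_le_one_eq_one_eqOn_zero {X : Type*} [TopologicalSpace X]
    [CompactSpace X] [T2Space X] {y : X} {s : Set X} (hs : IsClosed s) (hy : y ∉ s) :
    ∃ b : C(X, ℂ), ‖b‖ ≤ 1 ∧ b y = 1 ∧ Set.EqOn b 0 s := by
  obtain ⟨f, hf₀, hf₁, hf⟩ := exists_continuous_zero_one_of_isClosed hs isClosed_singleton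
    (Set.disjoint_singleton_right.mpr hy)
  refine ⟨⟨fun z => (f z : ℂ), by fun_prop⟩, ?_, by simpa using hf₁ rfl, fun z hz => by
    simpa using hf₀ hz⟩
  refine (ContinuousMap.norm_le _ zero_le_one).mpr fun z => ?_
  simpa [abs_le] using ⟨(hf z).1.trans' (by norm_num), (hf z).2⟩

theorem lp.tendsto_norm_sub_sum_single {α : Type*} {E : α → Type*} [∀ i, NormedAddCommGroup (E i)]
    [DecidableEq α] {p : ENNReal} [Fact (1 ≤ p)] (hp : p ≠ ⊤) (f : lp E p) :
    Tendsto (fun s : Finset α => ‖f - ∑ i ∈ s, lp.single p i (f i)‖) atTop (𝓝 0) := by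
  have h := tendsto_iff_norm_sub_tendsto_zero.mp (lp.hasSum_single hp f)
  simp only [norm_sub_rev] at h
  exact h

section Density

variable {G X : Type*} [AddCommGroup G] [TopologicalSpace X] [CompactSpace X] [T2Space X]
  {p : G → X}

theorem exists_orbitConv_sum_single_eq (hp : p.Injective) [DecidableEq G]
    (ρ : lp (fun _ : G => ℂ) 1) {n₀ : G} (hn₀ : ρ n₀ ≠ 0) {F : Finset G} (hF : n₀ ∈ F)
    (t : G → ℂ) (K : Finset G) :
    ∃ a : lp (fun _ : G => C(X, ℂ)) 1, ‖a‖ ≤ (∑ k ∈ K, ‖t k‖) / ‖ρ n₀‖ ∧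
      orbitConv p (∑ m ∈ F, lp.single 1 m (ρ m)) a = ∑ k ∈ K, lp.single 1 k (t k) := by
  have hbump (k : G) : ∃ b : C(X, ℂ), ‖b‖ ≤ 1 ∧ b (p k) = 1 ∧
      ∀ m ∈ F, m ≠ n₀ → b (p (k - n₀ + m)) = 0 := by
    obtain ⟨b, hb, hb₁, hb₀⟩ := exists_continuousMap_norm_le_one_eq_one_eqOn_zero
      ((F.erase n₀).finite_toSet.image fun m => p (k - n₀ + m)).isClosed (y := p k) (by
        rintro ⟨m, hm, hmk⟩
        refine (Finset.mem_erase.mp hm).1 ?_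
        calc m = k - n₀ + m - k + n₀ := by abel
          _ = n₀ := by rw [hp hmk]; abel)
    exact ⟨b, hb, hb₁, fun m hm hmn => hb₀ ⟨m, Finset.mem_erase.mpr ⟨hmn, hm⟩, rfl⟩⟩
  choose b hb hb₁ hb₀ using hbump
  refine ⟨∑ k ∈ K, lp.single 1 (k - n₀) ((t k / ρ n₀) • b k), ?_, ?_⟩
  · calc ‖∑ k ∈ K, lp.single (E := fun _ : G => C(X, ℂ)) 1 (k - n₀) ((t k / ρ n₀) • b k)‖
          ≤ ∑ k ∈ K, ‖lp.single (E := fun _ : G => C(X, ℂ)) 1 (k - n₀) ((t k / ρ n₀) • b k)‖ :=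
            norm_sum_le _ _
      _ ≤ ∑ k ∈ K, ‖t k‖ / ‖ρ n₀‖ := Finset.sum_le_sum fun k _ => by
          rw [lp.norm_single one_pos, norm_smul, norm_div]
          exact mul_le_of_le_one_right (by positivity) (hb k)
      _ = _ := (Finset.sum_div ..).symm
  · simp only [map_sum, sum_apply, orbitConv_single_single]
    refine Finset.sum_congr rfl fun k _ => ?_
    rw [Finset.sum_eq_single n₀ (fun m hm hmn => by simp [hb₀ k m hm hmn])
      (fun h => (h hF).elim)]
    simp [hb₁, hn₀]

theorem exists_norm_le_norm_sub_orbitConv_le (hp : p.Injective) (ρ : lp (fun _ : G => ℂ) 1)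
    {n₀ : G} (hn₀ : ρ n₀ ≠ 0) (t : lp (fun _ : G => ℂ) 1) {η : ℝ} (hη : 0 < η) :
    ∃ a, ‖a‖ ≤ ‖t‖ / ‖ρ n₀‖ ∧ ‖t - orbitConv p ρ a‖ ≤ η := by
  classical
  set tK : Finset G → lp (fun _ : G => ℂ) 1 := fun K => ∑ k ∈ K, lp.single 1 k (t k)
  set ρF : Finset G → lp (fun _ : G => ℂ) 1 := fun F => ∑ m ∈ F, lp.single 1 m (ρ m)
  obtain ⟨K, hK⟩ := ((lp.tendsto_norm_sub_sum_single ENNReal.one_ne_top t).eventually_lt_const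
    (half_pos hη)).exists
  obtain ⟨F, hF, hρF⟩ := ((eventually_ge_atTop {n₀}).and
    (((lp.tendsto_norm_sub_sum_single ENNReal.one_ne_top ρ).const_mul
      (‖t‖ / ‖ρ n₀‖)).eventually_lt_const (u := η / 2) (by simpa using half_pos hη))).exists
  obtain ⟨a, ha, hconv⟩ :=
    exists_orbitConv_sum_single_eq hp ρ hn₀ (Finset.singleton_subset_iff.mp hF) t K
  have ha' : ‖a‖ ≤ ‖t‖ / ‖ρ n₀‖ :=
    ha.trans (by gcongr; exact sum_le_hasSum K (fun _ _ => norm_nonneg _) (lp.hasSum_norm_one t))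
  refine ⟨a, ha', ?_⟩
  have hsplit : t - orbitConv p ρ a = (t - tK K) - orbitConv p (ρ - ρF F) a := by
    rw [map_sub, sub_apply, hconv]; abel
  calc ‖t - orbitConv p ρ a‖ ≤ ‖t - tK K‖ + ‖ρ - ρF F‖ * ‖a‖ := by
        rw [hsplit]; exact (norm_sub_le _ _).trans (by gcongr; exact norm_orbitConv_apply_le p _ a)
    _ ≤ η / 2 + ‖t‖ / ‖ρ n₀‖ * ‖ρ - ρF F‖ := by
        rw [mul_comm (‖t‖ / _)]; gcongr
    _ ≤ η := by linarith

end Density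

theorem Filter.Tendsto.exists_forall_ge_of_pos {α : Type*} {f : α → ℝ}
    (hf : Tendsto f cofinite (𝓝 0)) {a₁ : α} (ha₁ : 0 < f a₁) : ∃ a₀, ∀ a, f a ≤ f a₀ := by
  have hfin : {a | f a₁ ≤ f a}.Finite := by
    simpa using Filter.eventually_cofinite.mp (hf.eventually_lt_const ha₁)
  obtain ⟨a₀, ha₀, hmax⟩ := Set.exists_max_image _ f hfin ⟨a₁, le_refl (f a₁)⟩
  refine ⟨a₀, fun a => ?_⟩
  by_cases ha : f a₁ ≤ f a
  · exact hmax a ha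
  · exact (not_le.mp ha).le.trans ha₀

theorem stmt10 {X : Type*} [TopologicalSpace X] [CompactSpace X] [T2Space X]
    (σ : X ≃ₜ X) (x : X)
    (hx : Function.Injective fun n : ℤ => (σ.toEquiv ^ n) x)
    (ρ : lp (fun _ : ℤ => ℂ) 1) (hρ : ρ ≠ 0)
    (τ : lp (fun _ : ℤ => ℂ) 1) (ε : ℝ) (hε : 0 < ε) :
    ∃ f : ℤ → C(X, ℂ), Summable (fun n => ‖f n‖) ∧
      (∑' n, ‖f n‖) ≤ (1 + ε) * ‖τ‖ / (⨆ n : ℤ, ‖(ρ : ∀ _ : ℤ, ℂ) n‖) ∧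
      ∀ k : ℤ, HasSum (fun n : ℤ => f n ((σ.toEquiv ^ k) x) * (ρ : ∀ _ : ℤ, ℂ) (k - n))
        ((τ : ∀ _ : ℤ, ℂ) k) := by
  set p : ℤ → X := fun n => (σ.toEquiv ^ n) x
  obtain ⟨n₁, hn₁⟩ : ∃ n, ρ n ≠ 0 := by
    by_contra! h
    exact hρ (lp.ext (funext h))
  obtain ⟨n₀, hn₀⟩ := (lp.hasSum_norm_one ρ).summable.tendsto_cofinite_zero.exists_forall_ge_of_pos
    (norm_pos_iff.mpr hn₁)
  have hρn₀ : ρ n₀ ≠ 0 := norm_pos_iff.mp ((norm_pos_iff.mpr hn₁).trans_le (hn₀ n₁))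
  have hsup : ⨆ n, ‖ρ n‖ = ‖ρ n₀‖ :=
    ciSup_eq_of_forall_le_of_forall_lt_exists_gt hn₀ fun w hw => ⟨n₀, hw⟩
  obtain ⟨a, ha, hnorm⟩ := (orbitConv p ρ).exists_preimage_norm_le_one_add_of_approx
    (C := ‖ρ n₀‖⁻¹) (by positivity) (fun t η hη => by
      simpa [div_eq_mul_inv, mul_comm] using
        exists_norm_le_norm_sub_orbitConv_le hx ρ hρn₀ t hη) τ hε
  refine ⟨fun n => a n, (lp.hasSum_norm_one a).summable, ?_, fun k => ?_⟩
  · rw [(lp.hasSum_norm_one a).tsum_eq, hsup]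
    exact hnorm.trans_eq (by ring)
  · have h := (summable_orbitConv_term p ρ a k).hasSum
    rwa [← orbitConv_apply, ha] at h
end

section
/- Let x be an aperiodic point of a homeomorphism σ of a compact Hausdorff space X, and let 1 < p ≤ ∞. Consider the representation π^p_x of ℓ¹(Σ) on ℓ^p(ℤ) given by multiplication operators f ↦ (ξ(k) ↦ f(σ^k x) ξ(k)) and the right shift for δ. Then the orbit π^p_x(ℓ¹(Σ)) e_0 of the standard basis vector e_0 equals the canonical copy of ℓ¹(ℤ) inside ℓ^p(ℤ), which is a proper π^p_x-invariant subspace; hence π^p_x is not algebraically irreducible for p > 1. -/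
/-!
Evaluating the coefficients `f n ∈ C(X)` along the orbit of `x` gives `(π(Σ f_n δ^n) e₀)(k) = f_k(σ^k x)`,
which is dominated by the summable sequence `‖f_k‖`; conversely every `ξ ∈ ℓ¹(ℤ)` is obtained with the
constant coefficients `f_k = ξ(k)`. The orbit of `e₀` is therefore `ℓ¹(ℤ)`, which is invariant because
`π(Σ f_n δ^n)` acts on it by a convolution with an `ℓ¹` kernel, and proper in `ℓ^p(ℤ)` for `p > 1`
since `(|n|⁻¹)` lies in `ℓ^p` but not in `ℓ¹`.
-/

open scoped ENNReal

theorem memℓp_one_iff_summable_norm {ι E : Type*} [NormedAddCommGroup E] {f : ι → E} :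
    Memℓp f 1 ↔ Summable fun i => ‖f i‖ := by
  simp [memℓp_gen_iff (by simp : (0 : ℝ) < (1 : ℝ≥0∞).toReal)]

theorem exists_summable_continuousMap_eval_iff_memℓp_one {ι X E : Type*} [TopologicalSpace X]
    [CompactSpace X] [NormedAddCommGroup E] (y : ι → X) (ξ : ι → E) :
    (∃ f : ι → C(X, E), Summable (fun i => ‖f i‖) ∧ ∀ i, ξ i = f i (y i)) ↔ Memℓp ξ 1 := by
  rw [memℓp_one_iff_summable_norm]
  constructor
  · rintro ⟨f, hf, hξ⟩
    exact hf.of_nonneg_of_le (fun i => norm_nonneg _) fun i => hξ i ▸ (f i).norm_coe_le_norm (y i)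
  · intro hξ
    refine ⟨fun i => ContinuousMap.const X (ξ i), ?_, fun i => rfl⟩
    exact hξ.of_nonneg_of_le (fun i => norm_nonneg _) fun i =>
      (ContinuousMap.norm_le _ (norm_nonneg _)).mpr fun _ => le_rfl

theorem exists_memℓp_not_memℓp_one (𝕜 : Type*) [RCLike 𝕜] {p : ℝ≥0∞} (hp : 1 < p) :
    ∃ ξ : ℤ → 𝕜, Memℓp ξ p ∧ ¬Memℓp ξ 1 := by
  obtain ⟨r, hr1, hrp⟩ := exists_between hp
  have hr : 1 < r.toReal := by
    rw [← ENNReal.toReal_one]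
    exact (ENNReal.toReal_lt_toReal ENNReal.one_ne_top hrp.ne_top).mpr hr1
  have hnorm : ∀ n : ℤ, ‖((|(n : ℝ)|⁻¹ : ℝ) : 𝕜)‖ = |(n : ℝ)|⁻¹ := fun n => by
    simp
  refine ⟨fun n => ((|(n : ℝ)|⁻¹ : ℝ) : 𝕜), ?_, ?_⟩
  · refine Memℓp.of_exponent_ge (memℓp_gen ?_) hrp.le
    refine (Real.summable_abs_int_rpow hr).congr fun n => ?_
    rw [hnorm, Real.inv_rpow (abs_nonneg _), Real.rpow_neg (abs_nonneg _)]
  · rw [memℓp_one_iff_summable_norm]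
    simp_rw [hnorm]
    intro h
    refine Real.not_summable_natCast_inv ((h.comp_injective Nat.cast_injective).congr fun n => ?_)
    simp

theorem summable_prod_mul_sub_of_nonneg {G : Type*} [AddGroup G] {a b : G → ℝ} (ha₀ : 0 ≤ a)
    (hb₀ : 0 ≤ b) (ha : Summable a) (hb : Summable b) :
    Summable fun q : G × G => a q.2 * b (q.1 - q.2) := by
  let e : G × G ≃ G × G :=
    { toFun := fun q => (q.2, q.1 - q.2)
      invFun := fun q => (q.2 + q.1, q.1)
      left_inv := fun q => by simp
      right_inv := fun q => by simp }
  exact e.summable_iff.mpr (ha.mul_of_nonneg hb ha₀ hb₀)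

theorem memℓp_one_of_hasSum_mul_sub {G R : Type*} [AddGroup G] [NormedRing R] {c : G → G → R}
    {a : G → ℝ} (ha : Summable a) (hc : ∀ k n, ‖c k n‖ ≤ a n) {ξ η : G → R} (hξ : Memℓp ξ 1)
    (hη : ∀ k, HasSum (fun n => c k n * ξ (k - n)) (η k)) : Memℓp η 1 := by
  rw [memℓp_one_iff_summable_norm] at hξ ⊢
  have ha₀ : 0 ≤ a := fun n => (norm_nonneg _).trans (hc 0 n)
  have hb₀ : (0 : G → ℝ) ≤ fun k => ‖ξ k‖ := fun k => norm_nonneg (ξ k)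
  have hprod := summable_prod_mul_sub_of_nonneg ha₀ hb₀ ha hξ
  obtain ⟨hinner, houter⟩ :=
    (summable_prod_of_nonneg fun q => mul_nonneg (ha₀ _) (norm_nonneg _)).mp hprod
  refine houter.of_nonneg_of_le (fun k => norm_nonneg _) fun k => ?_
  refine (hη k).norm_le_of_bounded (hinner k).hasSum fun n => ?_
  exact (norm_mul_le _ _).trans (mul_le_mul_of_nonneg_right (hc k n) (norm_nonneg _))

theorem stmt11_general {X : Type*} [TopologicalSpace X] [CompactSpace X]
    (σ : X ≃ₜ X) (x : X)
    (p : ENNReal) [Fact (1 ≤ p)] (hp : 1 < p) :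
    {ξ : lp (fun _ : ℤ => ℂ) p | ∃ f : ℤ → C(X, ℂ), Summable (fun n => ‖f n‖) ∧
        ∀ k : ℤ, (ξ : ∀ _ : ℤ, ℂ) k = f k ((σ.toEquiv ^ k) x)}
      = {ξ : lp (fun _ : ℤ => ℂ) p | Memℓp (ξ : ∀ _ : ℤ, ℂ) 1} ∧
    {ξ : lp (fun _ : ℤ => ℂ) p | Memℓp (ξ : ∀ _ : ℤ, ℂ) 1} ≠ Set.univ ∧
    (∀ ξ : lp (fun _ : ℤ => ℂ) p, Memℓp (ξ : ∀ _ : ℤ, ℂ) 1 →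
      ∀ f : ℤ → C(X, ℂ), Summable (fun n => ‖f n‖) →
      ∀ η : lp (fun _ : ℤ => ℂ) p,
        (∀ k : ℤ, HasSum (fun n : ℤ => f n ((σ.toEquiv ^ k) x) * (ξ : ∀ _ : ℤ, ℂ) (k - n))
          ((η : ∀ _ : ℤ, ℂ) k)) →
        Memℓp (η : ∀ _ : ℤ, ℂ) 1) := by
  refine ⟨?_, ?_, fun ξ hξ f hf η hη => ?_⟩
  · ext ξ
    exact exists_summable_continuousMap_eval_iff_memℓp_one _ _
  · obtain ⟨ξ, hξp, hξ1⟩ := exists_memℓp_not_memℓp_one ℂ hp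
    intro h
    exact hξ1 (Set.eq_univ_iff_forall.mp h ⟨ξ, hξp⟩)
  · exact memℓp_one_of_hasSum_mul_sub hf (fun k n => (f n).norm_coe_le_norm _) hξ hη

theorem stmt11 {X : Type*} [TopologicalSpace X] [CompactSpace X] [T2Space X]
    (σ : X ≃ₜ X) (x : X)
    (hx : Function.Injective fun n : ℤ => (σ.toEquiv ^ n) x)
    (p : ENNReal) [Fact (1 ≤ p)] (hp : 1 < p) :
    {ξ : lp (fun _ : ℤ => ℂ) p | ∃ f : ℤ → C(X, ℂ), Summable (fun n => ‖f n‖) ∧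
        ∀ k : ℤ, (ξ : ∀ _ : ℤ, ℂ) k = f k ((σ.toEquiv ^ k) x)}
      = {ξ : lp (fun _ : ℤ => ℂ) p | Memℓp (ξ : ∀ _ : ℤ, ℂ) 1} ∧
    {ξ : lp (fun _ : ℤ => ℂ) p | Memℓp (ξ : ∀ _ : ℤ, ℂ) 1} ≠ Set.univ ∧
    (∀ ξ : lp (fun _ : ℤ => ℂ) p, Memℓp (ξ : ∀ _ : ℤ, ℂ) 1 →
      ∀ f : ℤ → C(X, ℂ), Summable (fun n => ‖f n‖) →
      ∀ η : lp (fun _ : ℤ => ℂ) p,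
        (∀ k : ℤ, HasSum (fun n : ℤ => f n ((σ.toEquiv ^ k) x) * (ξ : ∀ _ : ℤ, ℂ) (k - n))
          ((η : ∀ _ : ℤ, ℂ) k)) →
        Memℓp (η : ∀ _ : ℤ, ℂ) 1) :=
  stmt11_general σ x p hp
end

section
/- Let x be an aperiodic point of a homeomorphism σ of a compact Hausdorff space X and let 1 ≤ p < ∞. Then the representation π^p_x of ℓ¹(Σ) on ℓ^p(ℤ) (C(X) acting diagonally via k ↦ f(σ^k x) and δ acting by the right shift) is topologically irreducible: every nonzero closed subspace L ⊆ ℓ^p(ℤ) invariant under all π^p_x(a), a ∈ ℓ¹(Σ), equals ℓ^p(ℤ). -/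
/-!
Let `ξ ∈ L` with `ξ k₀ ≠ 0`. Since the orbit points `σ^k x` are distinct, for every finite
`F ⊆ ℤ` Urysohn's lemma gives `g ∈ C(X)` with `g = 1` at `σ^k₀ x`, `g = 0` at `σ^k x` for
`k ∈ F \ {k₀}` and `|g| ≤ 1`; then `π(g) ξ = (g(σ^k x) ξ_k)_k ∈ L` agrees with `ξ_k₀ e_k₀` on `F`
and is dominated by `ξ` off `F`, so it tends to `ξ_k₀ e_k₀` as `F` exhausts `ℤ` (this is where
`p < ∞` enters), and `ξ_k₀ e_k₀ ∈ L` by closedness. The shift `π(δ)` then carries `e_k₀` to every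
`e_n`, and the `e_n` span a dense subspace of `ℓ^p(ℤ)`.
-/

open Filter

theorem CompletelyRegularSpace.exists_continuous_eq_one_eqOn_zero {X : Type*}
    [TopologicalSpace X] [CompletelyRegularSpace X] {y : X} {s : Set X} (hs : IsClosed s)
    (hy : y ∉ s) : ∃ g : C(X, ℂ), g y = 1 ∧ Set.EqOn g 0 s ∧ ∀ z, ‖g z‖ ≤ 1 := by
  obtain ⟨f, hf, hfy, hfs⟩ := CompletelyRegularSpace.completely_regular y s hs hy
  refine ⟨⟨fun z => ((1 - f z : ℝ) : ℂ), by fun_prop⟩, by simp [hfy], fun z hz => ?_, fun z => ?_⟩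
  · simp [hfs hz]
  · have := (f z).2
    simp only [ContinuousMap.coe_mk, Complex.norm_real, Real.norm_eq_abs, abs_le]
    constructor <;> linarith [this.1, this.2]

namespace lp

variable {ι : Type*} {E : ι → Type*} [∀ i, NormedAddCommGroup (E i)] {p : ENNReal}
  [DecidableEq ι]

theorem sum_single_apply (f : ∀ i, E i) (s : Finset ι) (j : ι) :
    (∑ i ∈ s, lp.single p i (f i)) j = if j ∈ s then f j else 0 := by
  simp only [lp.coeFn_sum, Finset.sum_apply, lp.coeFn_single, Finset.sum_pi_single]

theorem single_mem_of_forall_finset [Fact (1 ≤ p)] (hp : p ≠ ⊤) {S : Set (lp E p)}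
    (hS : IsClosed S) (ξ : lp E p) (i₀ : ι)
    (h : ∀ F : Finset ι, ∃ η ∈ S,
      (∀ i ∈ F, η i = lp.single p i₀ (ξ i₀) i) ∧ ∀ i, ‖η i‖ ≤ ‖ξ i‖) :
    lp.single p i₀ (ξ i₀) ∈ S := by
  choose η hηS hηF hηξ using h
  have hp0 : p ≠ 0 := (zero_lt_one.trans_le (Fact.out : (1 : ENNReal) ≤ p)).ne'
  -- Off `F` (and `i₀ ∈ F`), `η F` is dominated by `ξ`, i.e. by the tail of `ξ` outside `F`.
  have hbound : ∀ F, {i₀} ≤ F →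
      ‖η F - lp.single p i₀ (ξ i₀)‖ ≤ ‖∑ i ∈ F, lp.single p i (ξ i) - ξ‖ := by
    intro F hF
    refine lp.norm_mono hp0 fun i => ?_
    by_cases hi : i ∈ F
    · simp [hηF F i hi]
    · have hi₀ : i ≠ i₀ := fun h => hi (hF (Finset.mem_singleton.2 h))
      rw [lp.coeFn_sub, lp.coeFn_sub, Pi.sub_apply, Pi.sub_apply, sum_single_apply, if_neg hi,
        lp.single_apply_ne p i₀ _ hi₀, sub_zero, zero_sub, _root_.norm_neg]
      exact hηξ F i
  have htail := tendsto_iff_norm_sub_tendsto_zero.1 (lp.hasSum_single hp ξ)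
  refine hS.mem_of_tendsto (f := η) (b := atTop) (tendsto_iff_norm_sub_tendsto_zero.2 ?_)
    (Eventually.of_forall hηS)
  exact squeeze_zero' (Eventually.of_forall fun F => norm_nonneg _)
    ((eventually_ge_atTop {i₀}).mono hbound) htail

theorem eq_top_of_single_mem {𝕜 : Type*} [NormedRing 𝕜] [∀ i, Module 𝕜 (E i)]
    [∀ i, IsBoundedSMul 𝕜 (E i)] [Fact (1 ≤ p)] (hp : p ≠ ⊤) {L : Submodule 𝕜 (lp E p)}
    (hL : IsClosed (L : Set (lp E p))) (h : ∀ i (a : E i), lp.single p i a ∈ L) : L = ⊤ :=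
  Submodule.eq_top_iff'.2 fun f => hL.mem_of_tendsto (lp.hasSum_single hp f)
    (Eventually.of_forall fun _ => L.sum_mem fun i _ => h i _)

end lp

section OrbitRepresentation

variable {X : Type*} [TopologicalSpace X] [CompactSpace X] {p : ENNReal}

/-- `L` is invariant under `π^p_x(∑ f_n δ^n)` for every `f ∈ ℓ¹(ℤ, C(X))`. -/
def IsOrbitRepInvariant (σ : X ≃ₜ X) (x : X) (L : Submodule ℂ (lp (fun _ : ℤ => ℂ) p)) :
    Prop :=
  ∀ f : ℤ → C(X, ℂ), Summable (fun n => ‖f n‖) →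
    ∀ ξ ∈ L, ∀ η : lp (fun _ : ℤ => ℂ) p,
      (∀ k : ℤ, HasSum (fun n : ℤ => f n ((σ.toEquiv ^ k) x) * (ξ : ∀ _ : ℤ, ℂ) (k - n))
        ((η : ∀ _ : ℤ, ℂ) k)) → η ∈ L

namespace IsOrbitRepInvariant

variable {σ : X ≃ₜ X} {x : X} {L : Submodule ℂ (lp (fun _ : ℤ => ℂ) p)}

theorem mem_of_monomial (hL : IsOrbitRepInvariant σ x L) (d : ℤ) (g : C(X, ℂ))
    {ξ : lp (fun _ : ℤ => ℂ) p} (hξ : ξ ∈ L) {η : lp (fun _ : ℤ => ℂ) p}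
    (hη : ∀ k, η k = g ((σ.toEquiv ^ k) x) * ξ (k - d)) : η ∈ L := by
  refine hL (Pi.single d g) (summable_of_ne_finset_zero (s := {d}) fun n hn => ?_) ξ hξ η
    fun k => ?_
  · simp [Finset.mem_singleton.not.1 hn]
  · rw [hη k]
    convert hasSum_single d fun n hn => ?_ using 1
    · simp
    · simp [hn]

theorem single_mem_of_single_mem (hL : IsOrbitRepInvariant σ x L) {m : ℤ} {a : ℂ}
    (ha : a ≠ 0) (hm : lp.single p m a ∈ L) (n : ℤ) (c : ℂ) : lp.single p n c ∈ L := by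
  have hshift : lp.single p n a ∈ L := hL.mem_of_monomial (n - m) 1 hm fun k => by
    simp only [lp.single_apply, ContinuousMap.one_apply, one_mul]
    grind
  simpa [← lp.single_smul, div_mul_cancel₀ c ha] using L.smul_mem (c / a) hshift

theorem single_mem [T35Space X] [Fact (1 ≤ p)] (hp : p ≠ ⊤) (hL : IsOrbitRepInvariant σ x L)
    (hx : Function.Injective fun n : ℤ => (σ.toEquiv ^ n) x)
    (hLc : IsClosed (L : Set (lp (fun _ : ℤ => ℂ) p))) {ξ : lp (fun _ : ℤ => ℂ) p}
    (hξ : ξ ∈ L) (k₀ : ℤ) : lp.single p k₀ (ξ k₀) ∈ L := by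
  refine lp.single_mem_of_forall_finset hp hLc ξ k₀ fun F => ?_
  have hk₀ : (σ.toEquiv ^ k₀) x ∉ (fun n : ℤ => (σ.toEquiv ^ n) x) '' ↑(F.erase k₀) := by
    rintro ⟨k, hk, hkk₀⟩
    exact (Finset.mem_erase.1 hk).1 (hx hkk₀)
  obtain ⟨g, hg1, hg0, hg_le⟩ := CompletelyRegularSpace.exists_continuous_eq_one_eqOn_zero
    ((F.erase k₀).finite_toSet.image _).isClosed hk₀
  have hgξ_le (k : ℤ) : ‖g ((σ.toEquiv ^ k) x) * ξ k‖ ≤ ‖ξ k‖ := by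
    simpa [norm_mul] using mul_le_of_le_one_left (norm_nonneg _) (hg_le _)
  refine ⟨⟨_, (lp.memℓp ξ).mono' hgξ_le⟩, hL.mem_of_monomial 0 g hξ fun k => by simp,
    fun k hk => ?_, hgξ_le⟩
  by_cases hkk₀ : k = k₀
  · subst hkk₀
    simp [hg1]
  · simp [hkk₀, hg0 ⟨k, Finset.mem_erase.2 ⟨hkk₀, hk⟩, rfl⟩]

end IsOrbitRepInvariant

end OrbitRepresentation

theorem stmt12 {X : Type*} [TopologicalSpace X] [CompactSpace X] [T2Space X]
    (σ : X ≃ₜ X) (x : X)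
    (hx : Function.Injective fun n : ℤ => (σ.toEquiv ^ n) x)
    (p : ENNReal) [Fact (1 ≤ p)] (hp : p ≠ ⊤)
    (L : Submodule ℂ (lp (fun _ : ℤ => ℂ) p))
    (hLc : IsClosed (L : Set (lp (fun _ : ℤ => ℂ) p))) (hL0 : L ≠ ⊥)
    (hinv : ∀ f : ℤ → C(X, ℂ), Summable (fun n => ‖f n‖) →
      ∀ ξ ∈ L, ∀ η : lp (fun _ : ℤ => ℂ) p,
        (∀ k : ℤ, HasSum (fun n : ℤ => f n ((σ.toEquiv ^ k) x) * (ξ : ∀ _ : ℤ, ℂ) (k - n))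
          ((η : ∀ _ : ℤ, ℂ) k)) → η ∈ L) :
    L = ⊤ := by
  have hL : IsOrbitRepInvariant σ x L := hinv
  obtain ⟨ξ, hξL, hξ0⟩ := Submodule.exists_mem_ne_zero_of_ne_bot hL0
  obtain ⟨k₀, hk₀⟩ : ∃ k, ξ k ≠ 0 := by
    by_contra! h
    exact hξ0 (lp.ext (funext h))
  exact lp.eq_top_of_single_mem hp hLc
    (hL.single_mem_of_single_mem hk₀ (hL.single_mem hp hx hLc hξL k₀))
end

section
/- Let x be an aperiodic point of a homeomorphism σ of a compact Hausdorff space X, let p ∈ [1,∞], and let a = Σ_n f_n δ^n ∈ ℓ¹(Σ). Then π^p_x(a) = 0 if and only if every coefficient function f_n vanishes on the closure of the orbit {σ^k x : k ∈ ℤ}. In particular, Ker(π^p_x) does not depend on p and is a selfadjoint closed ideal of ℓ¹(Σ). -/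
theorem lp.tsum_mul_single_apply_sub {R : Type*} [NormedRing R] (p : ENNReal) (c : ℤ → R)
    (k n : ℤ) (a : R) :
    ∑' m : ℤ, c m * (lp.single (E := fun _ : ℤ => R) p (k - n) a : ∀ _ : ℤ, R) (k - m) =
      c n * a := by
  rw [tsum_eq_single n fun m hm => by rw [lp.single_apply_ne p _ _ (by omega), mul_zero],
    lp.single_apply_self]

theorem stmt14_general {X : Type*} [TopologicalSpace X]
    (σ : X ≃ₜ X) (x : X)
    (p : ENNReal)
    (f : ℤ → C(X, ℂ)) :
    (∀ ξ : lp (fun _ : ℤ => ℂ) p, ∀ k : ℤ,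
        (∑' n : ℤ, f n ((σ.toEquiv ^ k) x) * (ξ : ∀ _ : ℤ, ℂ) (k - n)) = 0)
      ↔ ∀ n : ℤ, ∀ y ∈ closure (Set.range fun k : ℤ => (σ.toEquiv ^ k) x),
          f n y = 0 := by
  constructor
  · intro h n
    have vanish_on_orbit : Set.EqOn (f n) 0 (Set.range fun k : ℤ => (σ.toEquiv ^ k) x) := by
      rintro _ ⟨k, rfl⟩
      simpa only [lp.tsum_mul_single_apply_sub, mul_one, Pi.zero_apply] using
        h (lp.single p (k - n) 1) k
    exact vanish_on_orbit.closure (f n).continuous continuous_const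
  · intro h ξ k
    simp [h _ _ (subset_closure ⟨k, rfl⟩)]

theorem stmt14 {X : Type*} [TopologicalSpace X] [CompactSpace X] [T2Space X]
    (σ : X ≃ₜ X) (x : X)
    (hx : Function.Injective fun n : ℤ => (σ.toEquiv ^ n) x)
    (p : ENNReal) [Fact (1 ≤ p)]
    (f : ℤ → C(X, ℂ)) (hf : Summable fun n => ‖f n‖) :
    (∀ ξ : lp (fun _ : ℤ => ℂ) p, ∀ k : ℤ,
        (∑' n : ℤ, f n ((σ.toEquiv ^ k) x) * (ξ : ∀ _ : ℤ, ℂ) (k - n)) = 0)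
      ↔ ∀ n : ℤ, ∀ y ∈ closure (Set.range fun k : ℤ => (σ.toEquiv ^ k) x),
          f n y = 0 :=
  stmt14_general σ x p f
end

section
/- Let p ≥ 1 be an integer, F ⊊ 𝕋 a proper closed subset of the unit circle, and λ_0 ∈ 𝕋 \ F. Then there exists a sequence (c_n) ∈ ℓ¹(ℤ) such that Σ_n λ^n c_n = 0 for all λ ∈ F and Σ_n λ_0^n c_n = 1. -/
/-!
Integrating by parts twice shows that the Fourier coefficients of a `C²` function on the unit
circle are `O(1/n²)`, so its Fourier series converges absolutely, and then pointwise to the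
function. Applied to a smooth bump function that equals `1` at `λ₀` and is supported in a disc
avoiding the closed set `F`, this gives the required sequence.
-/

open Function AddCircle Complex Real MeasureTheory

theorem Function.Periodic.deriv {𝕜 F : Type*} [NontriviallyNormedField 𝕜] [NormedAddCommGroup F]
    [NormedSpace 𝕜 F] {f : 𝕜 → F} {c : 𝕜} (hf : Periodic f c) : Periodic (deriv f) c := by
  intro x
  rw [← deriv_comp_add_const, funext hf]

theorem Function.Periodic.continuous_lift {B : Type*} [TopologicalSpace B] {f : ℝ → B} {T : ℝ}
    (hper : Periodic f T) (hf : Continuous f) : Continuous hper.lift :=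
  (QuotientAddGroup.isQuotientMap_mk _).continuous_iff.mpr hf

section
variable {T : ℝ} [hT : Fact (0 < T)]

theorem Function.Periodic.liftIoc_eq_lift {B : Type*} {f : ℝ → B} (hf : Periodic f T) (a : ℝ) :
    liftIoc T a f = hf.lift := by
  ext y
  conv_rhs => rw [← coe_equivIoc (a := a) (y := y)]
  rfl

theorem norm_fourierCoeff_le {E : Type*} [NormedAddCommGroup E] [NormedSpace ℂ E]
    {f : AddCircle T → E} {C : ℝ} (hC : ∀ t, ‖f t‖ ≤ C) (n : ℤ) :
    ‖fourierCoeff f n‖ ≤ C := by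
  calc ‖fourierCoeff f n‖ ≤ C * haarAddCircle.real Set.univ :=
        norm_integral_le_of_norm_le_const <| .of_forall fun t => by
          rw [norm_smul, fourier_apply, Circle.norm_coe, one_mul]
          exact hC t
    _ = C := by simp

theorem fourierCoeff_lift_eq_of_hasDerivAt {f f' : ℝ → ℂ} (hf : Periodic f T)
    (hf' : Periodic f' T) (hd : ∀ x, HasDerivAt f (f' x) x) (hc : Continuous f')
    {n : ℤ} (hn : n ≠ 0) :
    fourierCoeff hf.lift n = T / (2 * π * I * n) * fourierCoeff hf'.lift n := by
  have hab : 0 < 0 + T := by simpa using hT.out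
  rw [← hf.liftIoc_eq_lift 0, ← hf'.liftIoc_eq_lift 0, fourierCoeff_liftIoc_eq,
    fourierCoeff_liftIoc_eq, fourierCoeffOn_of_hasDerivAt hab hn (fun x _ => hd x)
      (hc.intervalIntegrable _ _), hf 0, sub_self, mul_zero, zero_sub]
  push_cast
  field_simp
  ring

theorem norm_fourierCoeff_lift_le_of_contDiff_two {f : ℝ → ℂ} (hf : ContDiff ℝ 2 f)
    (hper : Periodic f T) {C : ℝ} (hC : ∀ x, ‖deriv (deriv f) x‖ ≤ C) {n : ℤ} (hn : n ≠ 0) :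
    ‖fourierCoeff hper.lift n‖ ≤ (T / (2 * π)) ^ 2 * C * (1 / (n : ℝ) ^ 2) := by
  have hf' : ContDiff ℝ 1 (deriv f) := hf.iterate_deriv' 1 1
  have hscale : ‖(T : ℂ) / (2 * π * I * n)‖ = T / (2 * π) * (1 / |(n : ℝ)|) := by
    simp [abs_of_pos hT.out, abs_of_pos pi_pos]
    ring
  have hcoeff'' : ‖fourierCoeff hper.deriv.deriv.lift n‖ ≤ C :=
    norm_fourierCoeff_le (fun t => QuotientAddGroup.induction_on t hC) n
  rw [fourierCoeff_lift_eq_of_hasDerivAt hper hper.deriv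
      (fun x => (hf.differentiable two_ne_zero x).hasDerivAt)
      (hf.continuous_deriv one_le_two) hn,
    fourierCoeff_lift_eq_of_hasDerivAt hper.deriv hper.deriv.deriv
      (fun x => (hf'.differentiable one_ne_zero x).hasDerivAt)
      (hf'.continuous_deriv le_rfl) hn, norm_mul, norm_mul, hscale]
  calc T / (2 * π) * (1 / |(n : ℝ)|) * (T / (2 * π) * (1 / |(n : ℝ)|) *
        ‖fourierCoeff hper.deriv.deriv.lift n‖)
      = (T / (2 * π)) ^ 2 * ‖fourierCoeff hper.deriv.deriv.lift n‖ * (1 / (n : ℝ) ^ 2) := by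
        rw [← sq_abs (n : ℝ)]
        ring
    _ ≤ (T / (2 * π)) ^ 2 * C * (1 / (n : ℝ) ^ 2) := by gcongr

theorem summable_norm_fourierCoeff_lift_of_contDiff_two {f : ℝ → ℂ} (hf : ContDiff ℝ 2 f)
    (hper : Periodic f T) : Summable fun n => ‖fourierCoeff hper.lift n‖ := by
  have hf'' : Continuous (deriv (deriv f)) :=
    (hf.iterate_deriv' 1 1).continuous_deriv le_rfl
  obtain ⟨C, hC⟩ := (hper.deriv.deriv.isBounded_of_continuous hT.out.ne' hf'').exists_norm_le
  refine .of_norm_bounded_eventually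
    ((summable_one_div_int_pow.mpr one_lt_two).mul_left ((T / (2 * π)) ^ 2 * C)) ?_
  filter_upwards [Filter.eventually_cofinite_ne 0] with n hn
  simpa using norm_fourierCoeff_lift_le_of_contDiff_two hf hper (fun x => hC _ ⟨x, rfl⟩) hn

end

theorem fourier_coe_two_pi (n : ℤ) (θ : ℝ) :
    fourier n (θ : AddCircle (2 * π)) = exp (θ * I) ^ n := by
  rw [fourier_coe_apply, ← exp_int_mul]
  congr 1
  field_simp
  push_cast
  ring

theorem exists_summable_norm_hasSum_zpow_mul_of_contDiff {g : ℂ → ℂ} (hg : ContDiff ℝ 2 g) :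
    ∃ c : ℤ → ℂ, Summable (fun n => ‖c n‖) ∧
      ∀ z : ℂ, ‖z‖ = 1 → HasSum (fun n : ℤ => z ^ n * c n) (g z) := by
  have : Fact (0 < 2 * π) := ⟨two_pi_pos⟩
  set f : ℝ → ℂ := fun θ => g (exp (θ * I))
  have hf : ContDiff ℝ 2 f := hg.comp <| ((Complex.contDiff_exp (𝕜 := ℂ)).restrict_scalars ℝ).comp
    (ofRealCLM.contDiff.mul contDiff_const)
  have hper : Periodic f (2 * π) := fun θ => by
    simp only [f, ofReal_add, ofReal_mul, add_mul, Complex.exp_add, ofReal_ofNat,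
      exp_two_pi_mul_I, mul_one]
  have hsummable := summable_norm_fourierCoeff_lift_of_contDiff_two hf hper
  refine ⟨fourierCoeff hper.lift, hsummable, fun z hz => ?_⟩
  have hsum := has_pointwise_sum_fourier_series_of_summable
    (f := ⟨hper.lift, hper.continuous_lift hf.continuous⟩) hsummable.of_norm
    (arg z : AddCircle (2 * π))
  have hz' : exp (arg z * I) = z := by
    simpa [hz] using norm_mul_exp_arg_mul_I z
  simp only [ContinuousMap.coe_mk, fourier_coe_two_pi, hper.lift_coe, f, hz', smul_eq_mul] at hsum
  simpa only [mul_comm] using hsum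

theorem stmt15_general (F : Set ℂ) (hF : F ⊆ {z : ℂ | ‖z‖ = 1})
    (hFc : IsClosed F)
    (l0 : ℂ) (hl0 : ‖l0‖ = 1) (hl0F : l0 ∉ F) :
    ∃ c : ℤ → ℂ, Summable (fun n => ‖c n‖) ∧
      (∀ l ∈ F, HasSum (fun n : ℤ => l ^ n * c n) 0) ∧
      HasSum (fun n : ℤ => l0 ^ n * c n) 1 := by
  obtain ⟨ε, hε, hball⟩ := Metric.isOpen_iff.mp hFc.isOpen_compl l0 hl0F
  let φ : ContDiffBump l0 := ⟨ε / 2, ε, half_pos hε, half_lt_self hε⟩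
  obtain ⟨c, hc, hsum⟩ := exists_summable_norm_hasSum_zpow_mul_of_contDiff
    (ofRealCLM.contDiff.comp (φ.contDiff (n := 2)))
  refine ⟨c, hc, fun l hl => ?_, ?_⟩
  · have hφl : φ l = 0 := φ.zero_of_le_dist (not_lt.mp fun h => hball h hl)
    simpa [hφl] using hsum l (hF hl)
  · simpa [φ.one_of_mem_closedBall (Metric.mem_closedBall_self φ.rIn_pos.le)] using hsum l0 hl0

theorem stmt15 (p : ℕ) (hp : 1 ≤ p) (F : Set ℂ) (hF : F ⊆ {z : ℂ | ‖z‖ = 1})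
    (hFc : IsClosed F) (hFne : F ≠ {z : ℂ | ‖z‖ = 1})
    (l0 : ℂ) (hl0 : ‖l0‖ = 1) (hl0F : l0 ∉ F) :
    ∃ c : ℤ → ℂ, Summable (fun n => ‖c n‖) ∧
      (∀ l ∈ F, HasSum (fun n : ℤ => l ^ n * c n) 0) ∧
      HasSum (fun n : ℤ => l0 ^ n * c n) 1 :=
  stmt15_general F hF hFc l0 hl0 hl0F
end

section
/- Let X be a compact Hausdorff space, σ a homeomorphism, x a point of exact period p, and for λ ∈ 𝕋 let P_{x,λ} = Ker(π_{x,λ}) ⊆ ℓ¹(Σ), where π_{x,λ} is the p-dimensional irreducible representation associated with x and λ. Then for a = Σ_n f_n δ^n ∈ ℓ¹(Σ): a ∈ ⋂_{λ∈𝕋} P_{x,λ} if and only if f_n vanishes on the orbit {x, σx, …, σ^{p−1}x} for all n ∈ ℤ. -/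
/-- The cyclic `p × p` matrix sending `e_j ↦ e_{j+1}` for `j ≤ p-2` and `e_{p-1} ↦ lam • e_0`. -/
def cyc (p : ℕ) (lam : ℂ) : Matrix (Fin p) (Fin p) ℂ :=
  fun i j =>
    if (i : ℕ) = ((j : ℕ) + 1) % p then (if (j : ℕ) = p - 1 then lam else 1) else 0

/-- Integer powers of a (presumed invertible) matrix. -/
noncomputable def zpowM (p : ℕ) (A : Matrix (Fin p) (Fin p) ℂ) (n : ℤ) :
    Matrix (Fin p) (Fin p) ℂ :=
  if 0 ≤ n then A ^ n.toNat else A⁻¹ ^ (-n).toNat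

/-!
On the orbit of `x` the representation `π_{x,λ}(δ)` is the twisted cyclic shift `cyc p λ`, whose
`n`-th power has, in entry `(i, k)`, the value `λ ^ l` if `n = p * l + (i - k)` and `0` otherwise.
Hence entry `(i, k)` of `π_{x,λ}(a)` is the absolutely convergent Fourier series
`∑ₗ f_{pl+i-k}(σⁱx) λˡ`; it vanishes for all `λ ∈ 𝕋` exactly when all its coefficients vanish,
and as `k` runs through `Fin p` these coefficients exhaust all `f_n(σⁱx)`.
-/

/- The series `∑ c l • fourier l` converges uniformly on the circle to `0`; pairing it in `L²`
with `fourier m` picks out `c m` by orthonormality. -/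
open MeasureTheory AddCircle in
theorem eq_zero_of_forall_tsum_mul_zpow_eq_zero {c : ℤ → ℂ} (hc : Summable fun l => ‖c l‖)
    (h : ∀ z : ℂ, ‖z‖ = 1 → ∑' l, c l * z ^ l = 0) : c = 0 := by
  have : Fact ((0 : ℝ) < 1) := ⟨one_pos⟩
  have hsum : Summable fun l => c l • fourier (T := 1) l :=
    .of_norm_bounded hc fun l => by rw [norm_smul, fourier_norm, mul_one]
  have hzero : ∑' l, c l • fourier (T := 1) l = 0 := by
    ext t
    rw [← ContinuousMap.evalCLM_apply ℂ t, ContinuousLinearMap.map_tsum _ hsum]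
    simpa [toCircle_zsmul] using h _ (Circle.norm_coe (toCircle t))
  funext m
  let L : C(UnitAddCircle, ℂ) →L[ℂ] ℂ :=
    innerSL ℂ (fourierLp 2 m) ∘L ContinuousMap.toLp 2 haarAddCircle ℂ
  have hL : ∀ l, L (c l • fourier l) = if m = l then c l else 0 := by
    simp [L, orthonormal_iff_ite.mp orthonormal_fourier]
  calc c m = ∑' l, L (c l • fourier l) := by simp only [hL, tsum_ite_eq']
    _ = L (∑' l, c l • fourier l) := (L.map_tsum hsum).symm
    _ = 0 := by rw [hzero, map_zero]

open Matrix

noncomputable def cycZPow (p : ℕ) (lam : ℂ) (n : ℤ) : Matrix (Fin p) (Fin p) ℂ :=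
  of fun i k => if (p : ℤ) ∣ n + k - i then lam ^ ((n + k - i) / p) else 0

lemma cycZPow_zero (p : ℕ) (lam : ℂ) : cycZPow p lam 0 = 1 := by
  ext i k
  have hp : (p : ℤ) ∣ k - i ↔ i = k := by
    refine ⟨fun h => Fin.ext ?_, fun h => by simp [h]⟩
    have := Int.eq_zero_of_abs_lt_dvd h (by rw [abs_lt]; omega)
    omega
  by_cases hik : i = k <;> simp [cycZPow, one_apply, hp, hik]

lemma mul_cyc_apply {p : ℕ} (lam : ℂ) (M : Matrix (Fin p) (Fin p) ℂ) (i j : Fin p) :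
    (M * cyc p lam) i j =
      M i ⟨(j + 1) % p, Nat.mod_lt _ j.pos⟩ * if (j : ℕ) = p - 1 then lam else 1 := by
  rw [mul_apply, Finset.sum_eq_single ⟨(j + 1) % p, Nat.mod_lt _ j.pos⟩]
  · simp [cyc]
  · intro k _ hk
    simp [cyc, Fin.ext_iff.not.mp hk]
  · simp

lemma cycZPow_mul_cyc (p : ℕ) {lam : ℂ} (hlam : lam ≠ 0) (n : ℤ) :
    cycZPow p lam n * cyc p lam = cycZPow p lam (n + 1) := by
  ext i j
  rw [mul_cyc_apply]
  have hp : (p : ℤ) ≠ 0 := by have := j.pos; omega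
  by_cases hj : (j : ℕ) = p - 1
  · have hwrap : (j + 1) % p = 0 := by rw [hj, Nat.sub_add_cancel j.pos, Nat.mod_self]
    have harg : n + 1 + j - i = (n + 0 - i) + p := by have := j.pos; omega
    simp only [cycZPow, of_apply, hwrap, if_pos hj, harg, dvd_add_self_right, Nat.cast_zero]
    split_ifs with hdvd
    · rw [Int.add_ediv_of_dvd_right (dvd_refl _), Int.ediv_self hp, zpow_add_one₀ hlam]
    · rw [zero_mul]
  · have hsucc : (j + 1) % p = j + 1 := Nat.mod_eq_of_lt (by have := j.isLt; omega)
    simp only [cycZPow, of_apply, hsucc, if_neg hj, mul_one, Nat.cast_add, Nat.cast_one]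
    ring_nf

lemma isUnit_det_cyc (p : ℕ) {lam : ℂ} (hlam : lam ≠ 0) : IsUnit (cyc p lam).det :=
  isUnit_det_of_left_inverse <| by
    rw [cycZPow_mul_cyc p hlam, neg_add_cancel, cycZPow_zero]

lemma cyc_zpow (p : ℕ) {lam : ℂ} (hlam : lam ≠ 0) (n : ℤ) : cyc p lam ^ n = cycZPow p lam n := by
  have hA := isUnit_det_cyc p hlam
  induction n using Int.induction_on with
  | zero => rw [zpow_zero, cycZPow_zero]
  | succ m ih => rw [zpow_add_one hA, ih, cycZPow_mul_cyc p hlam]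
  | pred m ih =>
    have h := cycZPow_mul_cyc p hlam (-m - 1)
    rw [sub_add_cancel] at h
    rw [zpow_sub_one hA, ih, ← h, mul_nonsing_inv_cancel_right _ _ hA]

lemma zpowM_eq_zpow {p : ℕ} (A : Matrix (Fin p) (Fin p) ℂ) (n : ℤ) : zpowM p A n = A ^ n := by
  rw [zpowM]
  split_ifs with hn
  · rw [← zpow_natCast, Int.toNat_of_nonneg hn]
  · rw [inv_pow', ← zpow_neg_natCast, Int.toNat_of_nonneg (by omega), neg_neg]

lemma norm_cycZPow_apply_le (p : ℕ) {lam : ℂ} (hlam : ‖lam‖ = 1) (n : ℤ) (i k : Fin p) :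
    ‖cycZPow p lam n i k‖ ≤ 1 := by
  simp only [cycZPow, of_apply]
  split_ifs
  · rw [norm_zpow, hlam, _root_.one_zpow]
  · simp

lemma tsum_diagonal_mul_cycZPow_apply {p : ℕ} {g : ℤ → Fin p → ℂ}
    (hg : ∀ i, Summable fun n => ‖g n i‖) {lam : ℂ} (hlam : ‖lam‖ = 1) (i k : Fin p) :
    (∑' n, diagonal (g n) * cycZPow p lam n) i k =
      ∑' l : ℤ, g (p * l + (i - k)) i * lam ^ l := by
  have hp : (p : ℤ) ≠ 0 := by have := i.pos; omega
  have hentry : ∀ n i k, (diagonal (g n) * cycZPow p lam n) i k = g n i * cycZPow p lam n i k :=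
    fun n i k => diagonal_mul _ _ _ _
  have hsum : Summable fun n => diagonal (g n) * cycZPow p lam n :=
    Pi.summable.2 fun i => Pi.summable.2 fun k => .of_norm_bounded (hg i) fun n => by
      rw [hentry, norm_mul]
      exact mul_le_of_le_one_right (norm_nonneg _) (norm_cycZPow_apply_le p hlam n i k)
  have he : Function.Injective fun l : ℤ => p * l + (i - k) :=
    (add_left_injective _).comp (mul_right_injective₀ hp)
  rw [(Pi.hasSum.1 (Pi.hasSum.1 hsum.hasSum i) k).tsum_eq.symm, ← he.tsum_eq]
  · refine tsum_congr fun l => ?_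
    have harg : (p * l + (i - k) : ℤ) + k - i = p * l := by ring
    simp [cycZPow, harg, Int.mul_ediv_cancel_left _ hp]
  · intro n hn
    rw [Function.mem_support, hentry] at hn
    have hdvd : (p : ℤ) ∣ n + k - i := by
      by_contra h
      simp [cycZPow, h] at hn
    obtain ⟨l, hl⟩ := hdvd
    exact ⟨l, by linarith⟩

lemma exists_eq_mul_add_sub {p : ℕ} (i : Fin p) (n : ℤ) :
    ∃ k : Fin p, ∃ l : ℤ, n = p * l + (i - k) := by
  have hp : (0 : ℤ) < p := by have := i.pos; omega
  have hmod := Int.emod_def (i - n) p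
  have hnonneg := Int.emod_nonneg (i - n) hp.ne'
  have hlt := Int.emod_lt_of_pos (i - n) hp
  refine ⟨⟨((i - n) % p).toNat, by omega⟩, -((i - n) / p), ?_⟩
  simp only [Int.toNat_of_nonneg hnonneg]
  linarith

theorem tsum_diagonal_mul_zpowM_cyc_eq_zero_iff {p : ℕ} {g : ℤ → Fin p → ℂ}
    (hg : ∀ i, Summable fun n => ‖g n i‖) :
    (∀ lam : ℂ, ‖lam‖ = 1 → ∑' n, diagonal (g n) * zpowM p (cyc p lam) n = 0) ↔
      ∀ n i, g n i = 0 := by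
  constructor
  · intro h n i
    obtain ⟨k, l, rfl⟩ := exists_eq_mul_add_sub i n
    have hfourier : ∀ lam : ℂ, ‖lam‖ = 1 → ∑' l : ℤ, g (p * l + (i - k)) i * lam ^ l = 0 := by
      intro lam hlam
      have hlam0 : lam ≠ 0 := by rintro rfl; simp at hlam
      have := congrFun₂ (h lam hlam) i k
      simp only [zpowM_eq_zpow, cyc_zpow p hlam0] at this
      rwa [tsum_diagonal_mul_cycZPow_apply hg hlam] at this
    have hinj : Function.Injective fun l : ℤ => p * l + (i - k) :=
      (add_left_injective _).comp (mul_right_injective₀ (by have := i.pos; omega))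
    exact congrFun (eq_zero_of_forall_tsum_mul_zpow_eq_zero
      ((hg i).comp_injective hinj) hfourier) l
  · intro h lam _
    obtain rfl : g = 0 := funext fun n => funext (h n)
    simp

theorem stmt16_general {X : Type*} [TopologicalSpace X] [CompactSpace X]
    (σ : X ≃ₜ X) (x : X) (p : ℕ)
    (f : ℤ → C(X, ℂ)) (hf : Summable fun n => ‖f n‖) :
    (∀ lam : ℂ, ‖lam‖ = 1 →
        (∑' n : ℤ,
          Matrix.diagonal (fun j : Fin p => f n ((σ.toEquiv ^ (j : ℕ)) x)) *
            zpowM p (cyc p lam) n) = 0)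
      ↔ ∀ n : ℤ, ∀ j : Fin p, f n ((σ.toEquiv ^ (j : ℕ)) x) = 0 :=
  tsum_diagonal_mul_zpowM_cyc_eq_zero_iff fun _ =>
    hf.of_nonneg_of_le (fun _ => norm_nonneg _) fun n => (f n).norm_coe_le_norm _

theorem stmt16 {X : Type*} [TopologicalSpace X] [CompactSpace X] [T2Space X]
    (σ : X ≃ₜ X) (x : X) (p : ℕ) (hp : 1 ≤ p)
    (hper : (σ.toEquiv ^ p) x = x)
    (hdist : Function.Injective fun j : Fin p => (σ.toEquiv ^ (j : ℕ)) x)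
    (f : ℤ → C(X, ℂ)) (hf : Summable fun n => ‖f n‖) :
    (∀ lam : ℂ, ‖lam‖ = 1 →
        (∑' n : ℤ,
          Matrix.diagonal (fun j : Fin p => f n ((σ.toEquiv ^ (j : ℕ)) x)) *
            zpowM p (cyc p lam) n) = 0)
      ↔ ∀ n : ℤ, ∀ j : Fin p, f n ((σ.toEquiv ^ (j : ℕ)) x) = 0 :=
  stmt16_general σ x p f hf
end
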